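/- Let (Φ, Ψ) be a random pair in ℝ^m × ℝ^n with strictly positive joint density p(φ, ψ) and marginal density q(ψ) = ∫ p(φ, ψ) dφ of Ψ, where ψ ↦ p(φ, ψ) is differentiable for each φ and differentiation under the integral is valid (∇q(ψ) = ∫ ∇_ψ p(φ, ψ) dφ for all ψ). Assume E‖∇_ψ log p(Φ, Ψ)‖² < ∞ and E‖∇ log q(Ψ)‖² < ∞. Then for every measurable s : ℝ^n → ℝ^n with E‖s(Ψ)‖² < ∞, E‖s(Ψ) − ∇_ψ log p(Φ, Ψ)‖² = E‖s(Ψ) − ∇ log q(Ψ)‖² + E‖∇ log q(Ψ) − ∇_ψ log p(Φ, Ψ)‖². In particular, the denoising score matching objective E‖s(Ψ) − ∇_ψ log p(Φ, Ψ)‖² is minimized exactly by s(ψ) = ∇ log q(ψ) (uniquely up to modification on a q-null set), i.e. the population optimum of denoising score matching with the conditional score as target equals the marginal score. -/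

import Mathlib

open MeasureTheory Filter Topology Function
open scoped RealInnerProductSpace ENNReal

/-!
The marginal score `S ψ = q(ψ)⁻¹ ∫ ∇_ψ p(φ, ψ) dφ` is the `L²(P)` projection of the joint score
`p(Φ, Ψ)⁻¹ ∇_ψ p(Φ, Ψ)` onto functions of `Ψ`. Indeed, for any `h`, transporting
`E ⟪h(Ψ), S(Ψ) - p(Φ, Ψ)⁻¹ ∇_ψ p(Φ, Ψ)⟫` to Lebesgue measure through the density `p` cancels the
factor `p⁻¹`, and Fubini leaves `∫ ⟪h ψ, q(ψ) S(ψ) - ∫ ∇_ψ p(φ, ψ) dφ⟫ dψ = 0`. The decomposition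
is then Pythagoras in `L²(P)`, with equality exactly when `s(Ψ) = S(Ψ)` almost surely.
-/

theorem measurable_uncurry_of_hasGradientAt {α ι : Type*} [MeasurableSpace α] [Fintype ι]
    {f : α → EuclideanSpace ℝ ι → ℝ} (hf : Measurable (uncurry f))
    {g : α → EuclideanSpace ℝ ι → EuclideanSpace ℝ ι}
    (hg : ∀ a y, HasGradientAt (f a) (g a y) y) :
    Measurable (uncurry g) := by
  classical
  refine (WithLp.measurable_toLp 2 _).comp (f := fun x => WithLp.ofLp (uncurry g x)) ?_
  refine measurable_pi_iff.2 fun i => ?_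
  -- the `i`-th partial derivative is the pointwise limit of difference quotients with step `1/k`
  have hquot : ∀ k : ℕ, Measurable fun x : α × EuclideanSpace ℝ ι =>
      (k : ℝ) * (f x.1 (x.2 + (k : ℝ)⁻¹ • EuclideanSpace.single i 1) - f x.1 x.2) := fun k =>
    ((hf.comp (measurable_fst.prodMk (measurable_snd.add_const _))).sub hf).const_mul _
  refine measurable_of_tendsto_metrizable' atTop hquot (tendsto_pi_nhds.2 fun x => ?_)
  have hlim := (hg x.1 x.2).hasFDerivAt.lim (EuclideanSpace.single i 1)
    (c := fun k : ℕ => (k : ℝ)) (by simpa using tendsto_natCast_atTop_atTop)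
  simpa [uncurry, InnerProductSpace.toDual_apply_apply, EuclideanSpace.inner_single_right]
    using hlim

section L2
variable {Ω F : Type*} [MeasurableSpace Ω] {μ : Measure Ω} [NormedAddCommGroup F]

theorem integral_norm_sub_sq_eq_zero_iff {A B : Ω → F} (hAB : MemLp (A - B) 2 μ) :
    ∫ ω, ‖A ω - B ω‖ ^ 2 ∂μ = 0 ↔ A =ᵐ[μ] B := by
  have hAB2 : Integrable (fun ω => ‖A ω - B ω‖ ^ 2) μ :=
    (memLp_two_iff_integrable_sq_norm hAB.1).1 hAB
  rw [integral_eq_zero_iff_of_nonneg (fun ω => by positivity) hAB2]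
  refine eventually_congr (ae_of_all _ fun ω => ?_)
  simp [sub_eq_zero]

variable [InnerProductSpace ℝ F]

theorem MeasureTheory.MemLp.integrable_inner {f g : Ω → F} (hf : MemLp f 2 μ) (hg : MemLp g 2 μ) :
    Integrable (fun ω => ⟪f ω, g ω⟫) μ :=
  (hf.norm.integrable_mul hg.norm).mono' (hf.1.inner hg.1)
    (ae_of_all _ fun ω => abs_real_inner_le_norm (f ω) (g ω))

theorem integral_norm_sub_sq_eq_add {A B C : Ω → F} (hA : MemLp A 2 μ) (hB : MemLp B 2 μ)
    (hC : MemLp C 2 μ) (horth : ∫ ω, ⟪A ω - B ω, B ω - C ω⟫ ∂μ = 0) :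
    ∫ ω, ‖A ω - C ω‖ ^ 2 ∂μ = ∫ ω, ‖A ω - B ω‖ ^ 2 ∂μ + ∫ ω, ‖B ω - C ω‖ ^ 2 ∂μ := by
  have hAB := hA.sub hB
  have hBC := hB.sub hC
  have hAB2 : Integrable (fun ω => ‖A ω - B ω‖ ^ 2) μ :=
    (memLp_two_iff_integrable_sq_norm hAB.1).1 hAB
  have hBC2 : Integrable (fun ω => ‖B ω - C ω‖ ^ 2) μ :=
    (memLp_two_iff_integrable_sq_norm hBC.1).1 hBC
  have hinner : Integrable (fun ω => 2 * ⟪A ω - B ω, B ω - C ω⟫) μ :=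
    (hAB.integrable_inner hBC).const_mul 2
  calc ∫ ω, ‖A ω - C ω‖ ^ 2 ∂μ
      = ∫ ω, ‖A ω - B ω‖ ^ 2 + 2 * ⟪A ω - B ω, B ω - C ω⟫ + ‖B ω - C ω‖ ^ 2 ∂μ := by
        refine integral_congr_ae (ae_of_all _ fun ω => ?_)
        simpa only [sub_add_sub_cancel] using norm_add_sq_real (A ω - B ω) (B ω - C ω)
    _ = ∫ ω, ‖A ω - B ω‖ ^ 2 ∂μ + ∫ ω, ‖B ω - C ω‖ ^ 2 ∂μ := by
        rw [integral_add (hAB2.add hinner : Integrable (fun ω => _ + _) μ) hBC2,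
          integral_add hAB2 hinner, integral_const_mul, horth, mul_zero, add_zero]

end L2

theorem integral_pos_of_forall_pos {α : Type*} [MeasurableSpace α] {μ : Measure α} [NeZero μ]
    {f : α → ℝ} (hf : Integrable f μ) (hpos : ∀ a, 0 < f a) : 0 < ∫ a, f a ∂μ := by
  rw [integral_pos_iff_support_of_nonneg (fun a => (hpos a).le) hf,
    support_eq_univ fun a => (hpos a).ne']
  exact Measure.measure_univ_pos.2 (NeZero.ne μ)

section Density
variable {Ω γ E : Type*} [MeasurableSpace Ω] [MeasurableSpace γ] [NormedAddCommGroup E]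
  [NormedSpace ℝ E] {P : Measure Ω} {μ : Measure γ} {Z : Ω → γ} {ρ : γ → ℝ}

theorem integral_comp_eq_integral_smul_of_map_eq_withDensity (hZ : Measurable Z)
    (hρ : Measurable ρ) (hρ0 : ∀ z, 0 ≤ ρ z)
    (hlaw : P.map Z = μ.withDensity fun z => ENNReal.ofReal (ρ z)) {F : γ → E}
    (hF : AEStronglyMeasurable F (P.map Z)) :
    ∫ ω, F (Z ω) ∂P = ∫ z, ρ z • F z ∂μ := by
  rw [← integral_map hZ.aemeasurable hF, hlaw, integral_withDensity_eq_integral_toReal_smul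
    hρ.ennreal_ofReal (ae_of_all _ fun _ => ENNReal.ofReal_lt_top)]
  simp only [ENNReal.toReal_ofReal (hρ0 _)]

theorem integrable_comp_iff_integrable_smul_of_map_eq_withDensity (hZ : Measurable Z)
    (hρ : Measurable ρ) (hρ0 : ∀ z, 0 ≤ ρ z)
    (hlaw : P.map Z = μ.withDensity fun z => ENNReal.ofReal (ρ z)) {F : γ → E}
    (hF : AEStronglyMeasurable F (P.map Z)) :
    Integrable (fun ω => F (Z ω)) P ↔ Integrable (fun z => ρ z • F z) μ := by
  refine (integrable_map_measure hF hZ.aemeasurable).symm.trans ?_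
  rw [hlaw, integrable_withDensity_iff_integrable_smul'
    hρ.ennreal_ofReal (ae_of_all _ fun _ => ENNReal.ofReal_lt_top)]
  simp only [ENNReal.toReal_ofReal (hρ0 _)]

end Density

section MarginalScore
variable {α β E : Type*} [MeasurableSpace α] [MeasurableSpace β] [NormedAddCommGroup E]
  {μ : Measure α} {ν : Measure β}

theorem stronglyMeasurable_marginalScore [NormedSpace ℝ E] [SFinite μ] {p : α → β → ℝ}
    {g : α → β → E} (hp : Measurable (uncurry p)) (hg : StronglyMeasurable (uncurry g)) :
    StronglyMeasurable fun b => (∫ a, p a b ∂μ)⁻¹ • ∫ a, g a b ∂μ :=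
  hp.stronglyMeasurable.integral_prod_left.measurable.inv.stronglyMeasurable.smul
    hg.integral_prod_left

theorem integral_smul_marginalScore_sub_eq_zero [NormedSpace ℝ E] [CompleteSpace E]
    {p : α → ℝ} {g : α → E} (hp : Integrable p μ) (hg : Integrable g μ)
    (hp0 : ∫ a, p a ∂μ ≠ 0) :
    ∫ a, p a • ((∫ a', p a' ∂μ)⁻¹ • ∫ a', g a' ∂μ) - g a ∂μ = 0 := by
  rw [integral_sub (hp.smul_const _) hg, integral_smul_const, smul_inv_smul₀ hp0, sub_self]

variable [InnerProductSpace ℝ E] [CompleteSpace E]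

theorem integral_inner_smul_marginalScore_sub_eq_zero [SFinite μ] [SFinite ν]
    {p : α → β → ℝ} {g : α → β → E} (h : β → E) (hp : ∀ b, Integrable (p · b) μ)
    (hp0 : ∀ b, ∫ a, p a b ∂μ ≠ 0) (hg : ∀ b, Integrable (g · b) μ)
    (hint : Integrable (fun x : α × β =>
      ⟪h x.2, p x.1 x.2 • ((∫ a, p a x.2 ∂μ)⁻¹ • ∫ a, g a x.2 ∂μ) - g x.1 x.2⟫) (μ.prod ν)) :
    ∫ x, ⟪h x.2, p x.1 x.2 • ((∫ a, p a x.2 ∂μ)⁻¹ • ∫ a, g a x.2 ∂μ) - g x.1 x.2⟫ ∂(μ.prod ν)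
      = 0 := by
  have hfiber : ∀ b,
      ∫ a, ⟪h b, p a b • ((∫ a', p a' b ∂μ)⁻¹ • ∫ a', g a' b ∂μ) - g a b⟫ ∂μ = 0 := fun b => by
    rw [integral_inner (f := fun a => p a b • _ - g a b) (((hp b).smul_const _).sub (hg b)),
      integral_smul_marginalScore_sub_eq_zero (hp b) (hg b) (hp0 b), inner_zero_right]
  rw [integral_prod_symm _ hint]
  simp only [hfiber, integral_zero]

theorem integral_inner_marginalScore_sub_score_eq_zero {Ω : Type*} [MeasurableSpace Ω]
    {P : Measure Ω} [SFinite μ] [SFinite ν] [NeZero μ] {X : Ω → α} {Y : Ω → β}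
    (hX : Measurable X) (hY : Measurable Y) {p : α → β → ℝ} (hp_meas : Measurable (uncurry p))
    (hp_pos : ∀ a b, 0 < p a b)
    (hlaw : P.map (fun ω => (X ω, Y ω))
      = (μ.prod ν).withDensity fun x => ENNReal.ofReal (p x.1 x.2))
    (hp_int : ∀ b, Integrable (p · b) μ) {q : β → ℝ} (hq : ∀ b, q b = ∫ a, p a b ∂μ)
    {g : α → β → E} (hg_meas : StronglyMeasurable (uncurry g))
    (hg_int : ∀ b, Integrable (g · b) μ) {h : β → E} (hh : StronglyMeasurable h)
    (hint : Integrable (fun ω => ⟪h (Y ω),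
      (q (Y ω))⁻¹ • (∫ a, g a (Y ω) ∂μ) - (p (X ω) (Y ω))⁻¹ • g (X ω) (Y ω)⟫) P) :
    ∫ ω, ⟪h (Y ω), (q (Y ω))⁻¹ • (∫ a, g a (Y ω) ∂μ) - (p (X ω) (Y ω))⁻¹ • g (X ω) (Y ω)⟫ ∂P
      = 0 := by
  obtain rfl : q = fun b => ∫ a, p a b ∂μ := funext hq
  set S : β → E := fun b => (∫ a, p a b ∂μ)⁻¹ • ∫ a, g a b ∂μ
  set F : α × β → ℝ := fun x => ⟪h x.2, S x.2 - (p x.1 x.2)⁻¹ • g x.1 x.2⟫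
  have hS : StronglyMeasurable S := stronglyMeasurable_marginalScore hp_meas hg_meas
  have hF : StronglyMeasurable F :=
    (hh.comp_measurable measurable_snd).inner ((hS.comp_measurable measurable_snd).sub
      (hp_meas.inv.stronglyMeasurable.smul hg_meas))
  have hpF : ∀ x, uncurry p x • F x = ⟪h x.2, p x.1 x.2 • S x.2 - g x.1 x.2⟫ := fun x => by
    rw [uncurry_def, smul_eq_mul, ← real_inner_smul_right, smul_sub,
      smul_inv_smul₀ (hp_pos x.1 x.2).ne']
  have hXY := hX.prodMk hY
  have hp_nonneg : ∀ x : α × β, 0 ≤ p x.1 x.2 := fun x => (hp_pos x.1 x.2).le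
  rw [integrable_comp_iff_integrable_smul_of_map_eq_withDensity (F := F) hXY hp_meas hp_nonneg hlaw
    hF.aestronglyMeasurable] at hint
  rw [integral_comp_eq_integral_smul_of_map_eq_withDensity (F := F) hXY hp_meas hp_nonneg hlaw
    hF.aestronglyMeasurable]
  simp only [hpF] at hint ⊢
  exact integral_inner_smul_marginalScore_sub_eq_zero h hp_int
    (fun b => (integral_pos_of_forall_pos (hp_int b) (hp_pos · b)).ne') hg_int hint

end MarginalScore

theorem denoising_score_matching_population_optimum_general
    {m n : ℕ} {Ω : Type*} [MeasurableSpace Ω]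
    (P : Measure Ω)
    (Φ : Ω → EuclideanSpace ℝ (Fin m)) (Ψ : Ω → EuclideanSpace ℝ (Fin n))
    (hΦ : Measurable Φ) (hΨ : Measurable Ψ)
    (p : EuclideanSpace ℝ (Fin m) → EuclideanSpace ℝ (Fin n) → ℝ)
    (hp_meas : Measurable fun x : EuclideanSpace ℝ (Fin m) × EuclideanSpace ℝ (Fin n) => p x.1 x.2)
    (hp_pos : ∀ φ ψ, 0 < p φ ψ)
    (hlaw : P.map (fun ω => (Φ ω, Ψ ω))
        = volume.withDensity fun x : EuclideanSpace ℝ (Fin m) × EuclideanSpace ℝ (Fin n) =>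
            ENNReal.ofReal (p x.1 x.2))
    (q : EuclideanSpace ℝ (Fin n) → ℝ)
    (hp_int : ∀ ψ, Integrable (fun φ => p φ ψ))
    (hq_def : ∀ ψ, q ψ = ∫ φ, p φ ψ)
    (g : EuclideanSpace ℝ (Fin m) → EuclideanSpace ℝ (Fin n) → EuclideanSpace ℝ (Fin n))
    (hg : ∀ φ ψ, HasGradientAt (fun ψ' => p φ ψ') (g φ ψ) ψ)
    (hg_int : ∀ ψ, Integrable (fun φ => g φ ψ))
    (hjoint_sq : Integrable (fun ω => ‖(p (Φ ω) (Ψ ω))⁻¹ • g (Φ ω) (Ψ ω)‖ ^ 2) P)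
    (hmarg_sq : Integrable (fun ω => ‖(q (Ψ ω))⁻¹ • ∫ φ, g φ (Ψ ω)‖ ^ 2) P)
    (s : EuclideanSpace ℝ (Fin n) → EuclideanSpace ℝ (Fin n))
    (hs_meas : Measurable s)
    (hs_sq : Integrable (fun ω => ‖s (Ψ ω)‖ ^ 2) P) :
    (∫ ω, ‖s (Ψ ω) - (p (Φ ω) (Ψ ω))⁻¹ • g (Φ ω) (Ψ ω)‖ ^ 2 ∂P)
        = (∫ ω, ‖s (Ψ ω) - (q (Ψ ω))⁻¹ • ∫ φ, g φ (Ψ ω)‖ ^ 2 ∂P)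
          + (∫ ω, ‖(q (Ψ ω))⁻¹ • (∫ φ, g φ (Ψ ω)) - (p (Φ ω) (Ψ ω))⁻¹ • g (Φ ω) (Ψ ω)‖ ^ 2 ∂P)
    ∧ (∫ ω, ‖(q (Ψ ω))⁻¹ • (∫ φ, g φ (Ψ ω)) - (p (Φ ω) (Ψ ω))⁻¹ • g (Φ ω) (Ψ ω)‖ ^ 2 ∂P)
        ≤ (∫ ω, ‖s (Ψ ω) - (p (Φ ω) (Ψ ω))⁻¹ • g (Φ ω) (Ψ ω)‖ ^ 2 ∂P)
    ∧ ((∫ ω, ‖s (Ψ ω) - (p (Φ ω) (Ψ ω))⁻¹ • g (Φ ω) (Ψ ω)‖ ^ 2 ∂P)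
          = (∫ ω, ‖(q (Ψ ω))⁻¹ • (∫ φ, g φ (Ψ ω)) - (p (Φ ω) (Ψ ω))⁻¹ • g (Φ ω) (Ψ ω)‖ ^ 2 ∂P)
        ↔ s =ᵐ[P.map Ψ] fun ψ => (q ψ)⁻¹ • ∫ φ, g φ ψ) := by
  obtain rfl : q = fun ψ => ∫ φ, p φ ψ := funext hq_def
  have hg_meas : Measurable (uncurry g) := measurable_uncurry_of_hasGradientAt hp_meas hg
  set S := fun ψ => (∫ φ, p φ ψ)⁻¹ • ∫ φ, g φ ψ
  have hS_meas : Measurable S :=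
    (stronglyMeasurable_marginalScore hp_meas hg_meas.stronglyMeasurable).measurable
  have hA : MemLp (fun ω => s (Ψ ω)) 2 P :=
    (memLp_two_iff_integrable_sq_norm (hs_meas.comp hΨ).aestronglyMeasurable).2 hs_sq
  have hB : MemLp (fun ω => S (Ψ ω)) 2 P :=
    (memLp_two_iff_integrable_sq_norm (hS_meas.comp hΨ).aestronglyMeasurable).2 hmarg_sq
  have hC : MemLp (fun ω => (p (Φ ω) (Ψ ω))⁻¹ • g (Φ ω) (Ψ ω)) 2 P :=
    (memLp_two_iff_integrable_sq_norm
      ((hp_meas.inv.smul hg_meas).comp (hΦ.prodMk hΨ)).aestronglyMeasurable).2 hjoint_sq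
  have horth := integral_inner_marginalScore_sub_score_eq_zero hΦ hΨ hp_meas hp_pos hlaw hp_int
    (fun _ => rfl) hg_meas.stronglyMeasurable hg_int (hs_meas.sub hS_meas).stronglyMeasurable
    ((hA.sub hB).integrable_inner (hB.sub hC))
  have hpyth := integral_norm_sub_sq_eq_add hA hB hC horth
  refine ⟨hpyth, hpyth ▸ le_add_of_nonneg_left (integral_nonneg fun _ => by positivity), ?_⟩
  rw [hpyth, add_eq_right, integral_norm_sub_sq_eq_zero_iff (hA.sub hB)]
  exact (ae_map_iff hΨ.aemeasurable (measurableSet_eq_fun hs_meas hS_meas)).symm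

/-- Population optimum of denoising score matching: let `(Φ, Ψ)` be a random
pair in `ℝ^m × ℝ^n` with strictly positive joint density `p` (w.r.t. Lebesgue
measure) and marginal density `q ψ = ∫ p(φ, ψ) dφ` of `Ψ`, where `ψ ↦ p(φ, ψ)`
has gradient `g φ ψ` and differentiation under the integral is valid.  Assume
the joint score `(φ,ψ) ↦ (p φ ψ)⁻¹ • g φ ψ` and the marginal score
`ψ ↦ (q ψ)⁻¹ • ∫ g(φ,ψ) dφ` are square integrable.  Then for every measurable
square-integrable `s : ℝ^n → ℝ^n`,
`E‖s(Ψ) − ∇_ψ log p(Φ,Ψ)‖² = E‖s(Ψ) − ∇ log q(Ψ)‖² + E‖∇ log q(Ψ) − ∇_ψ log p(Φ,Ψ)‖²`;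
in particular the objective is minimized by `s = ∇ log q`, uniquely up to
modification on a null set of the law of `Ψ`. -/
theorem denoising_score_matching_population_optimum
    {m n : ℕ} {Ω : Type*} [MeasurableSpace Ω]
    (P : Measure Ω) [IsProbabilityMeasure P]
    (Φ : Ω → EuclideanSpace ℝ (Fin m)) (Ψ : Ω → EuclideanSpace ℝ (Fin n))
    (hΦ : Measurable Φ) (hΨ : Measurable Ψ)
    (p : EuclideanSpace ℝ (Fin m) → EuclideanSpace ℝ (Fin n) → ℝ)
    (hp_meas : Measurable fun x : EuclideanSpace ℝ (Fin m) × EuclideanSpace ℝ (Fin n) => p x.1 x.2)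
    (hp_pos : ∀ φ ψ, 0 < p φ ψ)
    (hlaw : P.map (fun ω => (Φ ω, Ψ ω))
        = volume.withDensity fun x : EuclideanSpace ℝ (Fin m) × EuclideanSpace ℝ (Fin n) =>
            ENNReal.ofReal (p x.1 x.2))
    (q : EuclideanSpace ℝ (Fin n) → ℝ)
    (hp_int : ∀ ψ, Integrable (fun φ => p φ ψ))
    (hq_def : ∀ ψ, q ψ = ∫ φ, p φ ψ)
    (g : EuclideanSpace ℝ (Fin m) → EuclideanSpace ℝ (Fin n) → EuclideanSpace ℝ (Fin n))
    (hg : ∀ φ ψ, HasGradientAt (fun ψ' => p φ ψ') (g φ ψ) ψ)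
    (hg_int : ∀ ψ, Integrable (fun φ => g φ ψ))
    (hq_grad : ∀ ψ, HasGradientAt q (∫ φ, g φ ψ) ψ)
    (hjoint_sq : Integrable (fun ω => ‖(p (Φ ω) (Ψ ω))⁻¹ • g (Φ ω) (Ψ ω)‖ ^ 2) P)
    (hmarg_sq : Integrable (fun ω => ‖(q (Ψ ω))⁻¹ • ∫ φ, g φ (Ψ ω)‖ ^ 2) P)
    (s : EuclideanSpace ℝ (Fin n) → EuclideanSpace ℝ (Fin n))
    (hs_meas : Measurable s)
    (hs_sq : Integrable (fun ω => ‖s (Ψ ω)‖ ^ 2) P) :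
    (∫ ω, ‖s (Ψ ω) - (p (Φ ω) (Ψ ω))⁻¹ • g (Φ ω) (Ψ ω)‖ ^ 2 ∂P)
        = (∫ ω, ‖s (Ψ ω) - (q (Ψ ω))⁻¹ • ∫ φ, g φ (Ψ ω)‖ ^ 2 ∂P)
          + (∫ ω, ‖(q (Ψ ω))⁻¹ • (∫ φ, g φ (Ψ ω)) - (p (Φ ω) (Ψ ω))⁻¹ • g (Φ ω) (Ψ ω)‖ ^ 2 ∂P)
    ∧ (∫ ω, ‖(q (Ψ ω))⁻¹ • (∫ φ, g φ (Ψ ω)) - (p (Φ ω) (Ψ ω))⁻¹ • g (Φ ω) (Ψ ω)‖ ^ 2 ∂P)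
        ≤ (∫ ω, ‖s (Ψ ω) - (p (Φ ω) (Ψ ω))⁻¹ • g (Φ ω) (Ψ ω)‖ ^ 2 ∂P)
    ∧ ((∫ ω, ‖s (Ψ ω) - (p (Φ ω) (Ψ ω))⁻¹ • g (Φ ω) (Ψ ω)‖ ^ 2 ∂P)
          = (∫ ω, ‖(q (Ψ ω))⁻¹ • (∫ φ, g φ (Ψ ω)) - (p (Φ ω) (Ψ ω))⁻¹ • g (Φ ω) (Ψ ω)‖ ^ 2 ∂P)
        ↔ s =ᵐ[P.map Ψ] fun ψ => (q ψ)⁻¹ • ∫ φ, g φ ψ) :=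
  denoising_score_matching_population_optimum_general P Φ Ψ hΦ hΨ p hp_meas hp_pos hlaw q hp_int
    hq_def g hg hg_int hjoint_sq hmarg_sq s hs_meas hs_sq
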